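/- Let R and B be disjoint finite sets of red and blue points in the plane with R ∪ B in general position, |B| ≥ 1, and |R| = k'|B| + 1 for an integer k' ≥ 2; set k = k' + 1. Suppose b₁, b, b₂ are blue points that are consecutive in counter-clockwise order among the vertices of the convex hull of R ∪ B. Then there exist points r₁, r_k ∈ R such that: (i) the points of (R ∪ B) − {b} lying in the closed angular wedge with apex b bounded by the ray from b through r₁ and the ray from b through r_k (with r₁ preceding r_k in the clockwise radial order around b starting at b₁) are exactly k points, all of them red; (ii) |R₁| = k'|B₁| + 1, where R₁ (resp. B₁) is the set of points of R (resp. B − {b}) lying on the line ℓ(b, r₁) or strictly on the side of ℓ(b, r₁) containing b₁; and (iii) |R₂| = k'|B₂| + 1, where R₂ (resp. B₂) is the set of points of R (resp. B − {b}) lying on the line ℓ(b, r_k) or strictly on the side of ℓ(b, r_k) containing b₂. -/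

import Mathlib

/-!
Sort the points of `(R ∪ B) − {b}` by their angle at `b`; since `b₁, b, b₂` are consecutive hull
vertices, the angle sweeps the wedge from `b₁` to `b₂`. Give each red point weight `1` and each
other blue point weight `-k'`, so that the total weight is `k' + 1`. Let `r₁` be the last point
before which the prefix weight is still `≤ 0`. As weights rise by at most one, the prefix weight
just before `r₁` is `0`, `r₁` is red, and every prefix ending at or after `r₁` has positive
weight. A blue point `t` after `r₁` therefore needs `k' + 1` red points in `[r₁, t]`, so the first
`k' + 1` points from `r₁` on are red; `r_k` is the last of them. Conditions (ii) and (iii) say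
that the prefix up to `r₁` and the suffix from `r_k` on both have weight `1`.
-/

open scoped Classical

noncomputable section

/-- The plane. -/
abbrev Pt : Type := ℝ × ℝ

/-- A set of points is in general position if no three of its points are collinear. -/
def GenPos (P : Set Pt) : Prop :=
  ∀ p ∈ P, ∀ q ∈ P, ∀ r ∈ P, p ≠ q → p ≠ r → q ≠ r →
    ¬ Collinear ℝ ({p, q, r} : Set Pt)

/-- The planar cross product of two vectors. -/
def cross (u v : Pt) : ℝ := u.1 * v.2 - u.2 * v.1

/-- Signed orientation of the triple `(p, q, x)`: positive iff `x` lies strictly to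
the left of the directed line from `p` to `q`, zero iff the three points are
collinear. -/
def sgn3 (p q x : Pt) : ℝ := cross (q - p) (x - p)

/-- `[p, q]` is an edge of the convex hull of `P`, directed so that all of `P` lies
on the left of (or on) the directed line from `p` to `q`; successive such edges list
the hull vertices in counter-clockwise order. -/
def IsCCWHullEdge (P : Set Pt) (p q : Pt) : Prop :=
  p ∈ P ∧ q ∈ P ∧ p ≠ q ∧ ∀ x ∈ P, 0 ≤ sgn3 p q x

open Finset

section PrefixSums

variable {β : Type*} [LinearOrder β]

lemma filter_le_eq_self_or_exists_filter_lt_eq (s : Finset β) (t : β) :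
    s.filter (· ≤ t) = s ∨ ∃ u ∈ s, t < u ∧ s.filter (· < u) = s.filter (· ≤ t) := by
  by_cases h : (s.filter (t < ·)).Nonempty
  · right
    have hu := mem_filter.1 ((s.filter (t < ·)).min'_mem h)
    refine ⟨_, hu.1, hu.2, filter_congr fun x hx => ⟨fun hxu => ?_, fun hxt => hxt.trans_lt hu.2⟩⟩
    by_contra hxt
    exact (min'_le _ x (mem_filter.2 ⟨hx, not_le.1 hxt⟩)).not_gt hxu
  · left
    exact filter_true_of_mem fun x hx => not_lt.1 fun htx => h ⟨x, mem_filter.2 ⟨hx, htx⟩⟩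

lemma exists_card_filter_le_eq (s : Finset β) {n : ℕ} (hn₀ : 0 < n) (hn : n ≤ #s) :
    ∃ x ∈ s, #(s.filter (· ≤ x)) = n := by
  obtain ⟨m, hm⟩ : ∃ m, #s = m := ⟨_, rfl⟩
  set e := s.orderEmbOfFin hm
  let i : Fin m := ⟨n - 1, by omega⟩
  have hfilter : s.filter (· ≤ e i) = (Iic i).map e.toEmbedding := by
    conv_lhs => rw [← s.map_orderEmbOfFin_univ hm, filter_map]
    congr 1
    ext j
    simp [e]
  refine ⟨e i, s.orderEmbOfFin_mem hm i, ?_⟩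
  rw [hfilter, card_map, Fin.card_Iic]
  simp only [i]
  omega

section Sums

variable {M : Type*} [AddCommMonoid M] (s : Finset β) (w : β → M)

lemma sum_filter_lt_add_sum_filter_ge (t : β) :
    ∑ x ∈ s.filter (· < t), w x + ∑ x ∈ s.filter (t ≤ ·), w x = ∑ x ∈ s, w x := by
  simpa only [not_lt] using sum_filter_add_sum_filter_not s (· < t) w

lemma sum_filter_le_eq_sum_filter_lt_add {r t : β} (hrt : r ≤ t) :
    ∑ x ∈ s.filter (· ≤ t), w x
      = ∑ x ∈ s.filter (· < r), w x + ∑ x ∈ s.filter (fun x => r ≤ x ∧ x ≤ t), w x := by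
  rw [← sum_filter_add_sum_filter_not (s.filter (· ≤ t)) (· < r), filter_filter, filter_filter]
  congr 2 <;> exact filter_congr fun x _ => by grind

lemma sum_filter_le_eq_sum_filter_lt_add_self {t : β} (ht : t ∈ s) :
    ∑ x ∈ s.filter (· ≤ t), w x = ∑ x ∈ s.filter (· < t), w x + w t := by
  rw [sum_filter_le_eq_sum_filter_lt_add s w le_rfl]
  simp only [← le_antisymm_iff, filter_eq, if_pos ht, sum_singleton]

end Sums

lemma exists_sum_filter_lt_eq_zero (s : Finset β) (w : β → ℤ) (hw : ∀ x ∈ s, w x ≤ 1)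
    (hsum : 0 < ∑ x ∈ s, w x) :
    ∃ r ∈ s, ∑ x ∈ s.filter (· < r), w x = 0 ∧ w r = 1 ∧
      ∀ t ∈ s, r ≤ t → 0 < ∑ x ∈ s.filter (· ≤ t), w x := by
  set T := s.filter fun t => ∑ x ∈ s.filter (· < t), w x ≤ 0
  have hT : T.Nonempty := by
    have hs : s.Nonempty := nonempty_of_sum_ne_zero hsum.ne'
    refine ⟨s.min' hs, mem_filter.2 ⟨min'_mem _ _, (sum_eq_zero fun x hx => ?_).le⟩⟩
    exact absurd (mem_filter.1 hx).2 (not_lt.2 (min'_le _ _ (mem_filter.1 hx).1))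
  obtain ⟨r, hrT, hmax⟩ : ∃ r ∈ T, ∀ u ∈ T, u ≤ r := ⟨T.max' hT, T.max'_mem hT, T.le_max'⟩
  obtain ⟨hr, hr0⟩ := mem_filter.1 hrT
  have hpos : ∀ t ∈ s, r ≤ t → 0 < ∑ x ∈ s.filter (· ≤ t), w x := by
    intro t ht hrt
    rcases filter_le_eq_self_or_exists_filter_lt_eq s t with h | ⟨u, hu, htu, h⟩
    · rwa [h]
    · rw [← h]
      by_contra! hu0
      exact (hmax u (mem_filter.2 ⟨hu, hu0⟩)).not_gt (hrt.trans_lt htu)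
  have hr_pos := hpos r hr le_rfl
  rw [sum_filter_le_eq_sum_filter_lt_add_self s w hr] at hr_pos
  have := hw r hr
  exact ⟨r, hr, by omega, by omega, hpos⟩

end PrefixSums

section Discrepancy

variable {α : Type*}

def discrepancyWeight (R : Finset α) (k' : ℕ) (x : α) : ℤ := if x ∈ R then 1 else -k'

lemma discrepancyWeight_le_one (R : Finset α) (k' : ℕ) (x : α) :
    discrepancyWeight R k' x ≤ 1 := by
  unfold discrepancyWeight
  split_ifs <;> omega

variable {R B : Finset α} (k' : ℕ)

lemma discrepancyWeight_of_mem {x : α} (hx : x ∈ R) : discrepancyWeight R k' x = 1 := if_pos hx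

lemma discrepancyWeight_of_notMem {x : α} (hx : x ∉ R) : discrepancyWeight R k' x = -k' :=
  if_neg hx

lemma mem_of_discrepancyWeight_eq_one {x : α} (h : discrepancyWeight R k' x = 1) : x ∈ R := by
  by_contra hx
  rw [discrepancyWeight_of_notMem k' hx] at h
  omega

variable [DecidableEq α]

lemma sum_filter_discrepancyWeight (hRB : Disjoint R B) (P : α → Prop) [DecidablePred P] :
    ∑ x ∈ (R ∪ B).filter P, discrepancyWeight R k' x = #(R.filter P) - k' * #(B.filter P) := by
  rw [filter_union, sum_union (disjoint_filter_filter hRB),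
    sum_congr rfl fun x hx => discrepancyWeight_of_mem k' (mem_filter.1 hx).1,
    sum_congr rfl fun x hx =>
      discrepancyWeight_of_notMem k' (disjoint_right.1 hRB (mem_filter.1 hx).1)]
  simp only [sum_const, nsmul_eq_mul, mul_one, mul_neg]
  ring

lemma card_filter_eq_of_sum_discrepancyWeight_eq_one (hRB : Disjoint R B) (P : α → Prop)
    [DecidablePred P] (h : ∑ x ∈ (R ∪ B).filter P, discrepancyWeight R k' x = 1) :
    #(R.filter P) = k' * #(B.filter P) + 1 := by
  rw [sum_filter_discrepancyWeight k' hRB] at h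
  zify
  linarith

end Discrepancy

section RedWindow

variable {β : Type*} [LinearOrder β] {R B : Finset β} {k' : ℕ}

lemma mem_of_card_filter_Icc_le (hRB : Disjoint R B) {r t : β}
    (hr : ∑ x ∈ (R ∪ B).filter (· < r), discrepancyWeight R k' x = 0)
    (ht : t ∈ R ∪ B) (hrt : r ≤ t)
    (hpos : 0 < ∑ x ∈ (R ∪ B).filter (· ≤ t), discrepancyWeight R k' x)
    (hcard : #((R ∪ B).filter fun x => r ≤ x ∧ x ≤ t) ≤ k' + 1) : t ∈ R := by
  by_contra htR
  rw [sum_filter_le_eq_sum_filter_lt_add _ _ hrt, hr, zero_add,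
    sum_filter_discrepancyWeight k' hRB] at hpos
  have hblue : 1 ≤ #(B.filter fun x => r ≤ x ∧ x ≤ t) :=
    card_pos.2 ⟨t, mem_filter.2 ⟨(mem_union.1 ht).resolve_left htR, hrt, le_rfl⟩⟩
  rw [filter_union, card_union_of_disjoint (disjoint_filter_filter hRB)] at hcard
  zify at hblue hcard
  nlinarith

theorem exists_red_window (hRB : Disjoint R B) (hcard : #R = k' * #B + (k' + 1)) :
    ∃ r₁ ∈ R, ∃ rk ∈ R, r₁ ≤ rk ∧
      #((R ∪ B).filter fun x => r₁ ≤ x ∧ x ≤ rk) = k' + 1 ∧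
      (R ∪ B).filter (fun x => r₁ ≤ x ∧ x ≤ rk) ⊆ R ∧
      #(R.filter (· ≤ r₁)) = k' * #(B.filter (· ≤ r₁)) + 1 ∧
      #(R.filter (rk ≤ ·)) = k' * #(B.filter (rk ≤ ·)) + 1 := by
  have htotal : ∑ x ∈ R ∪ B, discrepancyWeight R k' x = k' + 1 := by
    have h := sum_filter_discrepancyWeight k' hRB fun _ => True
    simp only [filter_true, hcard] at h
    rw [h]; push_cast; ring
  obtain ⟨r₁, hr₁, hbefore, hwr₁, hpos⟩ := exists_sum_filter_lt_eq_zero (R ∪ B)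
    (discrepancyWeight R k') (fun x _ => discrepancyWeight_le_one R k' x) (by omega)
  have hsuffix := sum_filter_lt_add_sum_filter_ge (R ∪ B) (discrepancyWeight R k') r₁
  rw [hbefore, zero_add, htotal] at hsuffix
  have hW : k' + 1 ≤ #((R ∪ B).filter (r₁ ≤ ·)) := by
    have := sum_le_card_nsmul ((R ∪ B).filter (r₁ ≤ ·)) _ 1
      fun x _ => discrepancyWeight_le_one R k' x
    rw [hsuffix, nsmul_one] at this
    exact_mod_cast this
  obtain ⟨rk, hrkW, hrk⟩ := exists_card_filter_le_eq _ (by omega) hW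
  rw [filter_filter] at hrk
  obtain ⟨hrkS, hr₁rk⟩ := mem_filter.1 hrkW
  have hred : (R ∪ B).filter (fun x => r₁ ≤ x ∧ x ≤ rk) ⊆ R := fun t ht => by
    obtain ⟨htS, hr₁t, htrk⟩ := mem_filter.1 ht
    refine mem_of_card_filter_Icc_le hRB hbefore htS hr₁t (hpos t htS hr₁t) (hrk ▸ ?_)
    exact card_le_card (monotone_filter_right _ fun x _ hx => ⟨hx.1, hx.2.trans htrk⟩)
  have hrkR : rk ∈ R := hred (mem_filter.2 ⟨hrkS, hr₁rk, le_rfl⟩)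
  refine ⟨r₁, mem_of_discrepancyWeight_eq_one k' hwr₁, rk, hrkR, hr₁rk, hrk, hred,
    card_filter_eq_of_sum_discrepancyWeight_eq_one k' hRB _ ?_,
    card_filter_eq_of_sum_discrepancyWeight_eq_one k' hRB _ ?_⟩
  · rw [sum_filter_le_eq_sum_filter_lt_add_self _ _ hr₁, hbefore, hwr₁, zero_add]
  · have hwindow : ∑ x ∈ (R ∪ B).filter (fun x => r₁ ≤ x ∧ x ≤ rk),
        discrepancyWeight R k' x = k' + 1 := by
      rw [sum_congr rfl fun x hx => discrepancyWeight_of_mem k' (hred hx), sum_const, hrk]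
      simp
    have hupto := sum_filter_le_eq_sum_filter_lt_add (R ∪ B) (discrepancyWeight R k') hr₁rk
    rw [sum_filter_le_eq_sum_filter_lt_add_self _ _ hrkS, hbefore, hwindow,
      discrepancyWeight_of_mem k' hrkR] at hupto
    linarith [sum_filter_lt_add_sum_filter_ge (R ∪ B) (discrepancyWeight R k') rk]

end RedWindow

theorem exists_red_window_of_injOn {α β : Type*} [DecidableEq α] [LinearOrder β]
    {R B : Finset α} {k' : ℕ} (f : α → β) (hf : Set.InjOn f ↑(R ∪ B)) (hRB : Disjoint R B)
    (hcard : #R = k' * #B + (k' + 1)) :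
    ∃ r₁ ∈ R, ∃ rk ∈ R, f r₁ ≤ f rk ∧
      #((R ∪ B).filter fun x => f r₁ ≤ f x ∧ f x ≤ f rk) = k' + 1 ∧
      (R ∪ B).filter (fun x => f r₁ ≤ f x ∧ f x ≤ f rk) ⊆ R ∧
      #(R.filter (f · ≤ f r₁)) = k' * #(B.filter (f · ≤ f r₁)) + 1 ∧
      #(R.filter (f rk ≤ f ·)) = k' * #(B.filter (f rk ≤ f ·)) + 1 := by
  have hcard_image : ∀ A ⊆ R ∪ B, ∀ (P : β → Prop) [DecidablePred P],
      #((A.image f).filter P) = #(A.filter (P ∘ f)) := fun A hA P _ => by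
    rw [filter_image, card_image_of_injOn (hf.mono (coe_subset.2 ((filter_subset _ _).trans hA)))]
    rfl
  have hdisj : Disjoint (R.image f) (B.image f) := by
    simp only [disjoint_left, mem_image]
    rintro _ ⟨r, hr, rfl⟩ ⟨x, hx, hxr⟩
    rw [hf (mem_union_right R hx) (mem_union_left B hr) hxr] at hx
    exact disjoint_left.1 hRB hr hx
  obtain ⟨_, hρ₁, _, hρk, hle, hwindow, hred, h₁, h₂⟩ := exists_red_window hdisj (by
    rwa [card_image_of_injOn (hf.mono (by simp)), card_image_of_injOn (hf.mono (by simp))])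
  obtain ⟨r₁, hr₁, rfl⟩ := mem_image.1 hρ₁
  obtain ⟨rk, hrk, rfl⟩ := mem_image.1 hρk
  rw [← image_union] at hwindow hred
  refine ⟨r₁, hr₁, rk, hrk, hle, ?_, fun x hx => ?_, ?_, ?_⟩
  · rwa [hcard_image _ subset_rfl] at hwindow
  · obtain ⟨hxS, hx⟩ := mem_filter.1 hx
    obtain ⟨r, hr, hrx⟩ := mem_image.1 (hred (mem_filter.2 ⟨mem_image_of_mem f hxS, hx⟩))
    rwa [← hf (mem_union_left B hr) hxS hrx]
  · rwa [hcard_image _ subset_union_left, hcard_image _ subset_union_right] at h₁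
  · rwa [hcard_image _ subset_union_left, hcard_image _ subset_union_right] at h₂

section Orientation

lemma sgn3_swap (p x y : Pt) : sgn3 p y x = -sgn3 p x y := by
  simp only [sgn3, cross]; ring

lemma sgn3_swap_base (p q x : Pt) : sgn3 q p x = -sgn3 p q x := by
  simp only [sgn3, cross, Prod.fst_sub, Prod.snd_sub]; ring

lemma sgn3_self (p q : Pt) : sgn3 p q q = 0 := by
  simp only [sgn3, cross]; ring

lemma collinear_of_sgn3_eq_zero {p q r : Pt} (h : sgn3 p q r = 0) :
    Collinear ℝ ({p, q, r} : Set Pt) := by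
  rcases eq_or_ne q p with rfl | hqp
  · simpa using collinear_pair ℝ q r
  set d := q - p with hd_def
  have hd : d.1 ^ 2 + d.2 ^ 2 ≠ 0 := by
    intro h0
    apply hqp
    rw [← sub_eq_zero]
    ext
    · show d.1 = 0
      nlinarith [sq_nonneg d.1, sq_nonneg d.2]
    · show d.2 = 0
      nlinarith [sq_nonneg d.1, sq_nonneg d.2]
  refine (collinear_iff_of_mem (Set.mem_insert p _)).2 ⟨d, ?_⟩
  rintro x (rfl | rfl | rfl)
  · exact ⟨0, by simp⟩
  · exact ⟨1, by simp [hd_def]⟩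
  · -- the coefficient of the orthogonal projection of `x - p` onto `d`
    refine ⟨((x - p).1 * d.1 + (x - p).2 * d.2) / (d.1 ^ 2 + d.2 ^ 2), ?_⟩
    rw [vadd_eq_add, ← sub_eq_iff_eq_add]
    simp only [sgn3, cross] at h
    ext <;> simp only [Prod.smul_fst, Prod.smul_snd, smul_eq_mul] <;> field_simp
    · linear_combination (-d.2) * h
    · linear_combination d.1 * h

lemma GenPos.sgn3_ne_zero {P : Set Pt} (hP : GenPos P) {p q r : Pt} (hp : p ∈ P) (hq : q ∈ P)
    (hr : r ∈ P) (hpq : p ≠ q) (hpr : p ≠ r) (hqr : q ≠ r) : sgn3 p q r ≠ 0 :=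
  fun h => hP p hp q hq r hr hpq hpr hqr (collinear_of_sgn3_eq_zero h)

lemma IsCCWHullEdge.sgn3_pos {P : Set Pt} (hP : GenPos P) {p q x : Pt}
    (h : IsCCWHullEdge P p q) (hx : x ∈ P) (hxp : x ≠ p) (hxq : x ≠ q) : 0 < sgn3 p q x :=
  (h.2.2.2 x hx).lt_of_ne (hP.sgn3_ne_zero h.1 h.2.1 hx h.2.2.1 hxp.symm hxq.symm).symm

end Orientation

section RadialOrder

/-- When `sgn3 b b₁ b₂ < 0`, this increases with the clockwise angle at `b` from the ray
`b → b₁`, from `0` at `b₁` to `1` at `b₂`. -/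
def radialKey (b b₁ b₂ x : Pt) : ℝ := sgn3 b b₁ x / (sgn3 b b₁ x - sgn3 b b₂ x)

lemma radialKey_le_iff {b b₁ b₂ x y : Pt} (h₁₂ : sgn3 b b₁ b₂ < 0)
    (hx : sgn3 b b₁ x - sgn3 b b₂ x < 0) (hy : sgn3 b b₁ y - sgn3 b b₂ y < 0) :
    radialKey b b₁ b₂ x ≤ radialKey b b₁ b₂ y ↔ sgn3 b x y ≤ 0 := by
  have plucker : sgn3 b b₁ y * (sgn3 b b₁ x - sgn3 b b₂ x)
      - sgn3 b b₁ x * (sgn3 b b₁ y - sgn3 b b₂ y) = sgn3 b b₁ b₂ * sgn3 b x y := by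
    simp only [sgn3, cross, Prod.fst_sub, Prod.snd_sub]; ring
  rw [radialKey, radialKey, ← neg_div_neg_eq, ← neg_div_neg_eq (sgn3 b b₁ y),
    div_le_div_iff₀ (neg_pos.2 hx) (neg_pos.2 hy)]
  constructor <;> intro h <;> nlinarith

variable {P : Set Pt} {b₁ b b₂ : Pt}

lemma ne_of_isCCWHullEdge (hP : GenPos P) (h₁ : IsCCWHullEdge P b₁ b)
    (h₂ : IsCCWHullEdge P b b₂) {x : Pt} (hx : x ∈ P) (hxb : x ≠ b) (hxb₁ : x ≠ b₁) :
    b₁ ≠ b₂ := by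
  rintro rfl
  have hle := h₁.2.2.2 x hx
  rw [sgn3_swap_base] at hle
  exact hP.sgn3_ne_zero h₁.2.1 h₁.1 hx h₁.2.2.1.symm hxb.symm hxb₁.symm
    (le_antisymm (by linarith) (h₂.2.2.2 x hx))

lemma radialKey_le_iff_of_isCCWHullEdge (hP : GenPos P) (h₁ : IsCCWHullEdge P b₁ b)
    (h₂ : IsCCWHullEdge P b b₂) (h₁₂ : b₁ ≠ b₂) {x y : Pt} (hx : x ∈ P \ {b})
    (hy : y ∈ P \ {b}) :
    radialKey b b₁ b₂ x ≤ radialKey b b₁ b₂ y ↔ sgn3 b x y ≤ 0 := by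
  have hwedge : ∀ z ∈ P \ {b}, sgn3 b b₁ z - sgn3 b b₂ z < 0 := by
    rintro z ⟨hz, hzb⟩
    rcases eq_or_ne z b₁ with rfl | hzb₁
    · linarith [sgn3_self b z, h₂.sgn3_pos hP hz hzb h₁₂]
    · linarith [sgn3_swap_base b₁ b z, h₁.sgn3_pos hP hz hzb₁ hzb, h₂.2.2.2 z hz]
  refine radialKey_le_iff ?_ (hwedge x hx) (hwedge y hy)
  linarith [sgn3_swap_base b₁ b b₂, h₁.sgn3_pos hP h₂.2.1 h₁₂.symm h₂.2.2.1.symm]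

lemma radialKey_injOn (hP : GenPos P) (h₁ : IsCCWHullEdge P b₁ b) (h₂ : IsCCWHullEdge P b b₂)
    (h₁₂ : b₁ ≠ b₂) : Set.InjOn (radialKey b b₁ b₂) (P \ {b}) := by
  intro x hx y hy hxy
  by_contra hne
  have hle := (radialKey_le_iff_of_isCCWHullEdge hP h₁ h₂ h₁₂ hx hy).1 hxy.le
  have hge := (radialKey_le_iff_of_isCCWHullEdge hP h₁ h₂ h₁₂ hy hx).1 hxy.ge
  rw [sgn3_swap] at hge
  exact hP.sgn3_ne_zero h₁.2.1 hx.1 hy.1 (Ne.symm hx.2) (Ne.symm hy.2) hne (by linarith)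

lemma sgn3_mul_sgn3_b₁_iff (hP : GenPos P) (h₁ : IsCCWHullEdge P b₁ b)
    (h₂ : IsCCWHullEdge P b b₂) (h₁₂ : b₁ ≠ b₂) {p x : Pt} (hp : p ∈ P \ {b}) (hpb₁ : p ≠ b₁)
    (hx : x ∈ P \ {b}) :
    (sgn3 b p x * sgn3 b p b₁ ≤ 0 ↔ radialKey b b₁ b₂ p ≤ radialKey b b₁ b₂ x) ∧
      (0 ≤ sgn3 b p x * sgn3 b p b₁ ↔ radialKey b b₁ b₂ x ≤ radialKey b b₁ b₂ p) := by
  have hpos : 0 < sgn3 b p b₁ := by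
    linarith [sgn3_swap b b₁ p, sgn3_swap_base b₁ b p, h₁.sgn3_pos hP hp.1 hpb₁ hp.2]
  rw [radialKey_le_iff_of_isCCWHullEdge hP h₁ h₂ h₁₂ hp hx,
    radialKey_le_iff_of_isCCWHullEdge hP h₁ h₂ h₁₂ hx hp, sgn3_swap]
  constructor <;> constructor <;> intro h <;> nlinarith

lemma sgn3_mul_sgn3_b₂_iff (hP : GenPos P) (h₁ : IsCCWHullEdge P b₁ b)
    (h₂ : IsCCWHullEdge P b b₂) (h₁₂ : b₁ ≠ b₂) {p x : Pt} (hp : p ∈ P \ {b}) (hpb₂ : p ≠ b₂)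
    (hx : x ∈ P \ {b}) :
    (sgn3 b p x * sgn3 b p b₂ ≤ 0 ↔ radialKey b b₁ b₂ x ≤ radialKey b b₁ b₂ p) ∧
      (0 ≤ sgn3 b p x * sgn3 b p b₂ ↔ radialKey b b₁ b₂ p ≤ radialKey b b₁ b₂ x) := by
  have hneg : sgn3 b p b₂ < 0 := by
    linarith [sgn3_swap b p b₂, h₂.sgn3_pos hP hp.1 hp.2 hpb₂]
  rw [radialKey_le_iff_of_isCCWHullEdge hP h₁ h₂ h₁₂ hp hx,
    radialKey_le_iff_of_isCCWHullEdge hP h₁ h₂ h₁₂ hx hp, sgn3_swap]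
  constructor <;> constructor <;> intro h <;> nlinarith

end RadialOrder

theorem statement_14_general (R B : Finset Pt) (hdisj : Disjoint R B)
    (hgp : GenPos (↑(R ∪ B) : Set Pt)) (k' : ℕ)
    (hcard : R.card = k' * B.card + 1)
    (k : ℕ) (hkk : k = k' + 1)
    (b₁ b b₂ : Pt) (hb₁ : b₁ ∈ B) (hb : b ∈ B) (hb₂ : b₂ ∈ B)
    (hedge₁ : IsCCWHullEdge (↑(R ∪ B) : Set Pt) b₁ b)
    (hedge₂ : IsCCWHullEdge (↑(R ∪ B) : Set Pt) b b₂) :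
    ∃ r₁ rk : Pt, r₁ ∈ R ∧ rk ∈ R ∧
      sgn3 b rk r₁ * sgn3 b rk b₂ ≤ 0 ∧
      sgn3 b r₁ rk * sgn3 b r₁ b₁ ≤ 0 ∧
      (((R ∪ B).erase b).filter (fun x =>
          sgn3 b r₁ x * sgn3 b r₁ b₁ ≤ 0 ∧ sgn3 b rk x * sgn3 b rk b₂ ≤ 0)).card = k ∧
      ((R ∪ B).erase b).filter (fun x =>
          sgn3 b r₁ x * sgn3 b r₁ b₁ ≤ 0 ∧ sgn3 b rk x * sgn3 b rk b₂ ≤ 0) ⊆ R ∧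
      (R.filter (fun x => 0 ≤ sgn3 b r₁ x * sgn3 b r₁ b₁)).card
        = k' * ((B.erase b).filter (fun x => 0 ≤ sgn3 b r₁ x * sgn3 b r₁ b₁)).card + 1 ∧
      (R.filter (fun x => 0 ≤ sgn3 b rk x * sgn3 b rk b₂)).card
        = k' * ((B.erase b).filter (fun x => 0 ≤ sgn3 b rk x * sgn3 b rk b₂)).card + 1 := by
  have hnotB : ∀ {x}, x ∈ R → x ∉ B := fun hx => disjoint_left.1 hdisj hx
  have hS : (R ∪ B).erase b = R ∪ B.erase b := by
    rw [erase_union_distrib, erase_eq_of_notMem fun h => hnotB h hb]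
  have hSP : ∀ x ∈ R ∪ B.erase b, x ∈ (↑(R ∪ B) : Set Pt) \ {b} := fun x hx => by
    rw [← hS] at hx
    exact ⟨mem_coe.2 (mem_of_mem_erase hx), ne_of_mem_erase hx⟩
  obtain ⟨r, hr⟩ : R.Nonempty := card_pos.1 (by omega)
  have h₁₂ : b₁ ≠ b₂ := ne_of_isCCWHullEdge hgp hedge₁ hedge₂ (mem_coe.2 (mem_union_left B hr))
    (fun h => hnotB hr (h ▸ hb)) (fun h => hnotB hr (h ▸ hb₁))
  obtain ⟨r₁, hr₁, rk, hrk, hle, hwindow, hwindow_red, h₁, h₂⟩ :=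
    exists_red_window_of_injOn (radialKey b b₁ b₂)
      ((radialKey_injOn hgp hedge₁ hedge₂ h₁₂).mono fun x hx => hSP x (mem_coe.1 hx))
      (hdisj.mono_right (erase_subset b B)) (by rw [hcard, ← card_erase_add_one hb]; ring)
  have hside₁ := fun x hx => sgn3_mul_sgn3_b₁_iff hgp hedge₁ hedge₂ h₁₂
    (hSP r₁ (mem_union_left _ hr₁)) (fun h => hnotB hr₁ (h ▸ hb₁)) (hSP x hx)
  have hside₂ := fun x hx => sgn3_mul_sgn3_b₂_iff hgp hedge₁ hedge₂ h₁₂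
    (hSP rk (mem_union_left _ hrk)) (fun h => hnotB hrk (h ▸ hb₂)) (hSP x hx)
  have hwedge := filter_congr fun x hx => and_congr (hside₁ x hx).1 (hside₂ x hx).1
  refine ⟨r₁, rk, hr₁, hrk, (hside₂ r₁ (mem_union_left _ hr₁)).1.2 hle,
    (hside₁ rk (mem_union_left _ hrk)).1.2 hle, ?_, ?_, ?_, ?_⟩
  · rwa [hS, hwedge, hkk]
  · rwa [hS, hwedge]
  · rwa [filter_congr fun x hx => (hside₁ x (mem_union_left _ hx)).2,
      filter_congr fun x hx => (hside₁ x (mem_union_right _ hx)).2]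
  · rwa [filter_congr fun x hx => (hside₂ x (mem_union_left _ hx)).2,
      filter_congr fun x hx => (hside₂ x (mem_union_right _ hx)).2]

/-- Lemma on three consecutive blue hull points, `|R| = k'|B| + 1`.
Let `|R| = k'|B| + 1`, `k' ≥ 2`, `|B| ≥ 1`, `k = k' + 1`, and let `b₁, b, b₂` be blue
points consecutive in counter-clockwise order on the convex hull of `R ∪ B`. Then
there are red points `r₁, r_k`, with `r₁` preceding `r_k` in the clockwise radial
order around `b` starting at `b₁`, such that:
(i) the closed angular wedge at `b` between the rays `b→r₁` and `b→r_k` contains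
exactly `k` points of `(R ∪ B) \ {b}`, all of them red;
(ii) `|R₁| = k'|B₁| + 1` for the points on `ℓ(b,r₁)` or strictly on its `b₁`-side;
(iii) `|R₂| = k'|B₂| + 1` for the points on `ℓ(b,r_k)` or strictly on its `b₂`-side. -/
theorem statement_14 (R B : Finset Pt) (hdisj : Disjoint R B)
    (hgp : GenPos (↑(R ∪ B) : Set Pt)) (k' : ℕ) (hk' : 2 ≤ k') (hB : 1 ≤ B.card)
    (hcard : R.card = k' * B.card + 1)
    (k : ℕ) (hkk : k = k' + 1)
    (b₁ b b₂ : Pt) (hb₁ : b₁ ∈ B) (hb : b ∈ B) (hb₂ : b₂ ∈ B)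
    (hedge₁ : IsCCWHullEdge (↑(R ∪ B) : Set Pt) b₁ b)
    (hedge₂ : IsCCWHullEdge (↑(R ∪ B) : Set Pt) b b₂) :
    ∃ r₁ rk : Pt, r₁ ∈ R ∧ rk ∈ R ∧
      sgn3 b rk r₁ * sgn3 b rk b₂ ≤ 0 ∧
      sgn3 b r₁ rk * sgn3 b r₁ b₁ ≤ 0 ∧
      (((R ∪ B).erase b).filter (fun x =>
          sgn3 b r₁ x * sgn3 b r₁ b₁ ≤ 0 ∧ sgn3 b rk x * sgn3 b rk b₂ ≤ 0)).card = k ∧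
      ((R ∪ B).erase b).filter (fun x =>
          sgn3 b r₁ x * sgn3 b r₁ b₁ ≤ 0 ∧ sgn3 b rk x * sgn3 b rk b₂ ≤ 0) ⊆ R ∧
      (R.filter (fun x => 0 ≤ sgn3 b r₁ x * sgn3 b r₁ b₁)).card
        = k' * ((B.erase b).filter (fun x => 0 ≤ sgn3 b r₁ x * sgn3 b r₁ b₁)).card + 1 ∧
      (R.filter (fun x => 0 ≤ sgn3 b rk x * sgn3 b rk b₂)).card
        = k' * ((B.erase b).filter (fun x => 0 ≤ sgn3 b rk x * sgn3 b rk b₂)).card + 1 :=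
  statement_14_general R B hdisj hgp k' hcard k hkk b₁ b b₂ hb₁ hb hb₂ hedge₁ hedge₂
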